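/- arXiv:math/0511334 — 2 statements merged into one kernel-verified Lean document; each statement's English description precedes it below -/
import Mathlib

section
/- Necessity of the nonnegative-contraction condition on finite sets: let n : ℕ, let K : Matrix (Fin n) (Fin n) ℂ be Hermitian (K.IsHermitian), and suppose there exists a determinantal probability measure on the subsets of Fin n with kernel K. Then K is positive semidefinite and 1 - K is positive semidefinite. -/
open scoped ComplexConjugate

/-- Determinant of the principal submatrix of `K` on the finset `S`. -/
noncomputable def detMinor {n : ℕ} (K : Matrix (Fin n) (Fin n) ℂ) (S : Finset (Fin n)) : ℂ :=
  (Matrix.of fun a b : Fin S.card =>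
    K (S.orderEmbOfFin rfl a) (S.orderEmbOfFin rfl b)).det

/-- `p` is a determinantal probability measure on subsets of `Fin n` with kernel `K`. -/
def IsDeterminantal {n : ℕ} (K : Matrix (Fin n) (Fin n) ℂ)
    (p : PMF (Finset (Fin n))) : Prop :=
  ∀ S : Finset (Fin n),
    ∑ T ∈ Finset.univ.filter (fun T => S ⊆ T), ((p T).toReal : ℂ) = detMinor K S

open scoped ComplexOrder

lemma det_piecewise_one {n : ℕ} (M : Matrix (Fin n) (Fin n) ℂ) (S : Finset (Fin n)) :
    (Matrix.of (S.piecewise (M : Fin n → Fin n → ℂ)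
      ((1 : Matrix (Fin n) (Fin n) ℂ) : Fin n → Fin n → ℂ))).det = detMinor M S := by
  classical
  let e : {x // x ∈ S} ⊕ {x // x ∉ S} ≃ Fin n := Equiv.sumCompl (· ∈ S)
  rw [← Matrix.det_submatrix_equiv_self e]
  have hblock : (Matrix.of (S.piecewise (M : Fin n → Fin n → ℂ)
      ((1 : Matrix (Fin n) (Fin n) ℂ) : Fin n → Fin n → ℂ))).submatrix e e
      = Matrix.fromBlocks
          (Matrix.of fun a b : {x // x ∈ S} => M a b)
          (Matrix.of fun (a : {x // x ∈ S}) (b : {x // x ∉ S}) => M a b)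
          0 1 := by
    ext i j
    cases i with
    | inl i =>
      cases j with
      | inl j => simp [e, Finset.piecewise, i.2]
      | inr j => simp [e, Finset.piecewise, i.2]
    | inr i =>
      cases j with
      | inl j =>
        have hne : (i : Fin n) ≠ (j : Fin n) := by
          intro hc
          exact i.2 (hc ▸ j.2)
        simp [e, Finset.piecewise, i.2, Matrix.one_apply, hne, Subtype.ext_iff]
      | inr j =>
        simp [e, Finset.piecewise, i.2, Matrix.one_apply, Subtype.ext_iff]
  rw [hblock, Matrix.det_fromBlocks_zero₂₁, Matrix.det_one, mul_one]
  let c : Fin S.card ≃ {x // x ∈ S} := (S.orderIsoOfFin rfl).toEquiv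
  rw [← Matrix.det_submatrix_equiv_self c]
  rfl

lemma det_add_smul_one {n : ℕ} (M : Matrix (Fin n) (Fin n) ℂ) (t : ℂ) :
    (M + t • (1 : Matrix (Fin n) (Fin n) ℂ)).det
      = ∑ S : Finset (Fin n), t ^ (n - S.card) * detMinor M S := by
  classical
  set I : Matrix (Fin n) (Fin n) ℂ := 1 with hI
  have h1 : (M + t • I).det
      = ∑ S : Finset (Fin n),
          (Matrix.detRowAlternating : (Fin n → ℂ) [⋀^Fin n]→ₗ[ℂ] ℂ)
            (S.piecewise M (t • I)) :=
    (Matrix.detRowAlternating : (Fin n → ℂ) [⋀^Fin n]→ₗ[ℂ] ℂ).toMultilinearMap.map_add_univ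
      M (t • I)
  rw [h1]
  refine Finset.sum_congr rfl fun S _ => ?_
  have h2 : (S.piecewise (M : Fin n → Fin n → ℂ) (t • I : Fin n → Fin n → ℂ))
      = Sᶜ.piecewise (fun i => t • (S.piecewise (M : Fin n → Fin n → ℂ) (I : Fin n → Fin n → ℂ)) i)
          (S.piecewise (M : Fin n → Fin n → ℂ) (I : Fin n → Fin n → ℂ)) := by
    funext i
    by_cases hi : i ∈ S <;>
      simp only [Finset.piecewise, hi, Finset.mem_compl, not_true, not_false_iff,
        if_true, if_false, ite_true, ite_false] <;> rfl
  have h3 := (Matrix.detRowAlternating : (Fin n → ℂ) [⋀^Fin n]→ₗ[ℂ] ℂ).toMultilinearMap.map_piecewise_smul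
    (fun _ => t) (S.piecewise (M : Fin n → Fin n → ℂ) (I : Fin n → Fin n → ℂ)) Sᶜ
  rw [show ((Matrix.detRowAlternating : (Fin n → ℂ) [⋀^Fin n]→ₗ[ℂ] ℂ)
        (S.piecewise M (t • I)) : ℂ)
      = (Matrix.detRowAlternating : (Fin n → ℂ) [⋀^Fin n]→ₗ[ℂ] ℂ).toMultilinearMap
        (Sᶜ.piecewise (fun i => t • (S.piecewise (M : Fin n → Fin n → ℂ) (I : Fin n → Fin n → ℂ)) i)
          (S.piecewise (M : Fin n → Fin n → ℂ) (I : Fin n → Fin n → ℂ))) from by rw [← h2]; rfl,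
    h3, Finset.prod_const, Finset.card_compl, Fintype.card_fin, smul_eq_mul]
  congr 1
  exact det_piecewise_one M S

lemma detMinor_empty {n : ℕ} (M : Matrix (Fin n) (Fin n) ℂ) :
    detMinor M ∅ = 1 := by
  haveI : IsEmpty (Fin (∅ : Finset (Fin n)).card) := by rw [Finset.card_empty]; infer_instance
  exact Matrix.det_isEmpty

lemma posSemidef_of_detMinor_nonneg {n : ℕ} {M : Matrix (Fin n) (Fin n) ℂ}
    (hM : M.IsHermitian)
    (hmin : ∀ S : Finset (Fin n), ∃ r : ℝ, 0 ≤ r ∧ detMinor M S = (r : ℂ)) :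
    M.PosSemidef := by
  apply hM.posSemidef_iff_eigenvalues_nonneg.mpr
  intro i
  change (0:ℝ) ≤ _
  by_contra hneg
  push_neg at hneg
  set t : ℝ := -hM.eigenvalues i with ht
  have ht0 : 0 < t := by simp [ht]; linarith
  -- the determinant of M + t • 1 vanishes
  have hdet0 : (M + (t : ℂ) • (1 : Matrix (Fin n) (Fin n) ℂ)).det = 0 := by
    rw [← Matrix.exists_mulVec_eq_zero_iff]
    refine ⟨(hM.eigenvectorBasis i).ofLp, ?_, ?_⟩
    · intro hc
      exact hM.eigenvectorBasis.toBasis.ne_zero i (by simpa using hc)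
    · rw [Matrix.add_mulVec, Matrix.smul_mulVec, Matrix.one_mulVec,
        hM.mulVec_eigenvectorBasis]
      funext j
      simp only [Pi.add_apply, Pi.smul_apply, Pi.zero_apply, smul_eq_mul, Complex.real_smul]
      rw [show ((t : ℝ) : ℂ) = -((hM.eigenvalues i : ℝ) : ℂ) by rw [ht]; push_cast; ring]
      ring
  -- but it is a positive real number
  choose r hr0 hrdet using hmin
  have hdet : (M + (t : ℂ) • (1 : Matrix (Fin n) (Fin n) ℂ)).det
      = ((∑ S : Finset (Fin n), t ^ (n - S.card) * r S : ℝ) : ℂ) := by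
    rw [det_add_smul_one]
    push_cast
    exact Finset.sum_congr rfl fun S _ => by rw [hrdet S]
  have hpos : 0 < ∑ S : Finset (Fin n), t ^ (n - S.card) * r S := by
    refine Finset.sum_pos' (fun S _ => mul_nonneg (by positivity) (hr0 S)) ⟨∅, Finset.mem_univ _, ?_⟩
    have : r ∅ = 1 := by
      have := hrdet ∅
      rw [detMinor_empty] at this
      exact_mod_cast this.symm
    rw [this, Finset.card_empty, Nat.sub_zero, mul_one]
    positivity
  rw [hdet0] at hdet
  exact absurd (hdet.symm) (by exact_mod_cast hpos.ne')

lemma detMinor_eq_of {n : ℕ} (K : Matrix (Fin n) (Fin n) ℂ) (B : Finset (Fin n)) {k : ℕ}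
    (h : B.card = k) :
    detMinor K B = (Matrix.of fun a b : Fin k =>
      K (B.orderEmbOfFin h a) (B.orderEmbOfFin h b)).det := by
  subst h; rfl

lemma detMinor_one_sub {n : ℕ} (K : Matrix (Fin n) (Fin n) ℂ) (S : Finset (Fin n)) :
    detMinor (1 - K) S = ∑ B ∈ S.powerset, (-1 : ℂ) ^ B.card * detMinor K B := by
  classical
  let e : Fin S.card ↪o Fin n := S.orderEmbOfFin rfl
  let Ksub : Matrix (Fin S.card) (Fin S.card) ℂ := Matrix.of fun a b => K (e a) (e b)
  have h1 : detMinor (1 - K) S = ((1 : Matrix (Fin S.card) (Fin S.card) ℂ) - Ksub).det := by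
    unfold detMinor
    congr 1
    ext a b
    by_cases hab : a = b
    · subst hab; simp [Ksub, e, Matrix.sub_apply, Matrix.one_apply]
    · have hne : e a ≠ e b := fun hc => hab (e.injective hc)
      simp [Ksub, e, Matrix.sub_apply, Matrix.one_apply, hab, hne]
  have h2 : ((1 : Matrix (Fin S.card) (Fin S.card) ℂ) - Ksub)
      = (-Ksub) + (1 : ℂ) • (1 : Matrix (Fin S.card) (Fin S.card) ℂ) := by
    rw [one_smul, sub_eq_neg_add]
  rw [h1, h2, det_add_smul_one]
  simp only [one_pow, one_mul]
  have h3 : ∀ A : Finset (Fin S.card),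
      detMinor (-Ksub) A = (-1 : ℂ) ^ A.card * detMinor Ksub A := by
    intro A
    unfold detMinor
    rw [show (Matrix.of fun a b : Fin A.card =>
          (-Ksub) (A.orderEmbOfFin rfl a) (A.orderEmbOfFin rfl b))
        = -(Matrix.of fun a b : Fin A.card =>
          Ksub (A.orderEmbOfFin rfl a) (A.orderEmbOfFin rfl b)) from by ext a b; simp,
      Matrix.det_neg, Fintype.card_fin]
  have h4 : ∀ A : Finset (Fin S.card),
      detMinor Ksub A = detMinor K (A.map e.toEmbedding) := by
    intro A
    have hcard : (A.map e.toEmbedding).card = A.card := Finset.card_map _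
    rw [detMinor_eq_of K _ hcard]
    unfold detMinor
    have hemb : (fun x : Fin A.card => e (A.orderEmbOfFin rfl x))
        = (A.map e.toEmbedding).orderEmbOfFin hcard := by
      apply Finset.orderEmbOfFin_unique
      · intro x; exact Finset.mem_map_of_mem _ (Finset.orderEmbOfFin_mem _ _ _)
      · exact e.strictMono.comp (A.orderEmbOfFin rfl).strictMono
    congr 1
    ext a b
    simp only [Matrix.of_apply, Ksub, ← congrFun hemb a, ← congrFun hemb b]
  refine Finset.sum_bij (fun A _ => A.map e.toEmbedding) ?_ ?_ ?_ ?_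
  · intro A _
    rw [Finset.mem_powerset]
    intro b hb
    rcases Finset.mem_map.mp hb with ⟨a, _, rfl⟩
    exact Finset.orderEmbOfFin_mem S rfl a
  · intro A1 _ A2 _ hEq
    exact Finset.map_injective _ hEq
  · intro B hB
    refine ⟨Finset.univ.filter (fun a => e a ∈ B), Finset.mem_univ _, ?_⟩
    ext b
    simp only [Finset.mem_map, Finset.mem_filter, Finset.mem_univ, true_and]
    constructor
    · rintro ⟨a, ha, rfl⟩; exact ha
    · intro hb
      have hbS : b ∈ S := Finset.mem_powerset.mp hB hb
      have : b ∈ Set.range e := by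
        rw [Finset.range_orderEmbOfFin]; exact hbS
      obtain ⟨a, ha⟩ := this
      exact ⟨a, ha ▸ hb, ha⟩
  · intro A _
    rw [h3, h4, Finset.card_map]

open scoped ComplexOrder in
theorem determinantal_kernel_necessary {n : ℕ} (K : Matrix (Fin n) (Fin n) ℂ)
    (hK : K.IsHermitian)
    (h : ∃ p : PMF (Finset (Fin n)), IsDeterminantal K p) :
    K.PosSemidef ∧ (1 - K).PosSemidef := by
  classical
  obtain ⟨p, hp⟩ := h
  constructor
  · apply posSemidef_of_detMinor_nonneg hK
    intro S
    refine ⟨∑ T ∈ Finset.univ.filter (fun T => S ⊆ T), (p T).toReal, ?_, ?_⟩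
    · exact Finset.sum_nonneg fun T _ => ENNReal.toReal_nonneg
    · rw [← hp S]; push_cast; rfl
  · apply posSemidef_of_detMinor_nonneg (Matrix.isHermitian_one.sub hK)
    intro S
    refine ⟨∑ T : Finset (Fin n), (if S ∩ T = ∅ then (p T).toReal else 0), ?_, ?_⟩
    · refine Finset.sum_nonneg fun T _ => ?_
      split_ifs
      · exact ENNReal.toReal_nonneg
      · exact le_refl 0
    · rw [detMinor_one_sub]
      have hstep : ∀ B ∈ S.powerset, (-1 : ℂ) ^ B.card * detMinor K B
          = ∑ T : Finset (Fin n),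
              (if B ⊆ T then (-1 : ℂ) ^ B.card * ((p T).toReal : ℂ) else 0) := by
        intro B _
        rw [← hp B, Finset.mul_sum, Finset.sum_filter]
      rw [Finset.sum_congr rfl hstep, Finset.sum_comm]
      have hT : ∀ T : Finset (Fin n),
          (∑ B ∈ S.powerset, if B ⊆ T then (-1 : ℂ) ^ B.card * ((p T).toReal : ℂ) else 0)
          = (if S ∩ T = ∅ then ((p T).toReal : ℂ) else 0) := by
        intro T
        rw [← Finset.sum_filter]
        have hps : S.powerset.filter (· ⊆ T) = (S ∩ T).powerset := by
          ext B
          simp only [Finset.mem_filter, Finset.mem_powerset, Finset.subset_inter_iff]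
        rw [hps, ← Finset.sum_mul]
        have : (∑ B ∈ (S ∩ T).powerset, (-1 : ℂ) ^ B.card)
            = ((if S ∩ T = ∅ then 1 else 0 : ℤ) : ℂ) := by
          rw [← Finset.sum_powerset_neg_one_pow_card]
          push_cast
          rfl
        rw [this]
        split_ifs <;> simp
      rw [Finset.sum_congr rfl fun T _ => hT T]
      push_cast
      refine Finset.sum_congr rfl fun T _ => ?_
      split_ifs <;> simp
end

section
/- Number of points in a subset is Poisson–binomial with the eigenvalues of the restricted kernel: let n : ℕ, let K : Matrix (Fin n) (Fin n) ℂ be Hermitian with K positive semidefinite and 1 - K positive semidefinite, let p be a determinantal probability measure on the subsets of Fin n with kernel K, and let E : Finset (Fin n). Let K_E denote the principal submatrix of K on E (an E.card × E.card Hermitian matrix) with eigenvalues μ : Fin E.card → ℝ. Then for every k : ℕ, the sum of p S over all S : Finset (Fin n) with (S ∩ E).card = k equals the sum over all T : Finset (Fin E.card) with T.card = k of (∏ j ∈ T, μ j) * (∏ j ∉ T, (1 - μ j)). -/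
open scoped ComplexConjugate

section Helpers

open Finset

variable {R : Type*} [CommRing R] {α : Type*} [DecidableEq α]

/-- Sum over supersets of `T` inside `W` as a sum over subsets of `W \ T`. -/
lemma sum_supersets_eq (W T : Finset α) (hT : T ⊆ W) (f : Finset α → R) :
    ∑ B ∈ W.powerset.filter (fun B => T ⊆ B), f B
      = ∑ D ∈ (W \ T).powerset, f (T ∪ D) := by
  apply Finset.sum_nbij' (i := fun B => B \ T) (j := fun D => T ∪ D)
  · intro B hB
    simp only [mem_filter, mem_powerset] at hB
    exact mem_powerset.2 (sdiff_subset_sdiff hB.1 (Finset.Subset.refl _))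
  · intro D hD
    simp only [mem_powerset] at hD
    exact mem_filter.2 ⟨mem_powerset.2 (union_subset hT (hD.trans sdiff_subset)),
      subset_union_left⟩
  · intro B hB
    simp only [mem_filter, mem_powerset] at hB
    exact union_sdiff_of_subset hB.2
  · intro D hD
    simp only [mem_powerset] at hD
    exact union_sdiff_cancel_left (disjoint_sdiff.mono_right hD)
  · intro B hB
    simp only [mem_filter, mem_powerset] at hB
    rw [union_sdiff_of_subset hB.2]

lemma alt_sum (x : Finset α) :
    ∑ D ∈ x.powerset, (-1 : R) ^ D.card = if x = ∅ then 1 else 0 := by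
  calc ∑ D ∈ x.powerset, (-1 : R) ^ D.card
      = ∑ D ∈ x.powerset, (∏ _i ∈ D, (-1 : R)) * ∏ _i ∈ x \ D, (1 : R) := by
        simp [prod_const]
    _ = ∏ _i ∈ x, ((-1 : R) + 1) := (Finset.prod_add _ _ x).symm
    _ = if x = ∅ then 1 else 0 := by
        simp only [neg_add_cancel, prod_const, zero_pow_eq, card_eq_zero]

/-- Key combinatorial identity:
`∑_{B ⊆ W} (-1)^(|B|-k) C(|B|,k) = [|W| = k]`. -/
lemma comb_sum (W : Finset α) (k : ℕ) :
    ∑ B ∈ W.powerset, (-1 : R) ^ (B.card - k) * (B.card.choose k : R)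
      = if W.card = k then 1 else 0 := by
  have step1 : ∀ B : Finset α,
      (-1 : R) ^ (B.card - k) * (B.card.choose k : R)
        = ∑ A ∈ B.powersetCard k, (-1 : R) ^ (B.card - k) := by
    intro B
    rw [Finset.sum_const, Finset.card_powersetCard, nsmul_eq_mul, mul_comm]
  rw [Finset.sum_congr rfl fun B _ => step1 B]
  rw [Finset.sum_comm' (t' := W.powersetCard k)
    (s' := fun A => W.powerset.filter (fun B => A ⊆ B))
    (f := fun B A => (-1 : R) ^ (B.card - k))
    (by
      intro B A
      simp only [mem_powerset, mem_powersetCard, mem_filter]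
      constructor
      · rintro ⟨h1, h2, h3⟩
        exact ⟨⟨h1, h2⟩, h2.trans h1, h3⟩
      · rintro ⟨⟨h1, h2⟩, h3, h4⟩
        exact ⟨h1, h2, h4⟩)]
  have inner : ∀ A ∈ W.powersetCard k,
      ∑ B ∈ W.powerset.filter (fun B => A ⊆ B), (-1 : R) ^ (B.card - k)
        = if A = W then 1 else 0 := by
    intro A hA
    rw [mem_powersetCard] at hA
    rw [sum_supersets_eq W A hA.1]
    have : ∀ D ∈ (W \ A).powerset, (-1 : R) ^ ((A ∪ D).card - k) = (-1 : R) ^ D.card := by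
      intro D hD
      rw [mem_powerset] at hD
      rw [Finset.card_union_of_disjoint (disjoint_sdiff.mono_right hD), hA.2,
        Nat.add_sub_cancel_left]
    rw [Finset.sum_congr rfl this, alt_sum]
    by_cases h : A = W
    · subst h; simp
    · rw [if_neg h, if_neg]
      intro hh
      rw [sdiff_eq_empty_iff_subset] at hh
      exact h (Finset.Subset.antisymm hA.1 hh)
  rw [Finset.sum_congr rfl inner, Finset.sum_ite_eq' (W.powersetCard k) W (fun _ => (1 : R))]
  simp [mem_powersetCard]

/-- Expansion of the Poisson-binomial sum in terms of elementary products. -/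
lemma master {m : ℕ} (ν : Fin m → R) (k : ℕ) :
    ∑ T : Finset (Fin m), (-1 : R) ^ (T.card - k) * (T.card.choose k : R) * ∏ j ∈ T, ν j
      = ∑ T ∈ Finset.univ.filter (fun T : Finset (Fin m) => T.card = k),
          (∏ j ∈ T, ν j) * ∏ j ∈ Tᶜ, (1 - ν j) := by
  have step1 : ∀ T : Finset (Fin m),
      (-1 : R) ^ (T.card - k) * (T.card.choose k : R) * ∏ j ∈ T, ν j
        = ∑ A ∈ T.powersetCard k, (-1 : R) ^ (T.card - k) * ∏ j ∈ T, ν j := by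
    intro T
    rw [Finset.sum_const, Finset.card_powersetCard, nsmul_eq_mul, ← mul_assoc, mul_comm
      ((T.card.choose k : R)) _]
  calc ∑ T : Finset (Fin m), (-1 : R) ^ (T.card - k) * (T.card.choose k : R) * ∏ j ∈ T, ν j
      = ∑ T ∈ (Finset.univ : Finset (Fin m)).powerset, ∑ A ∈ T.powersetCard k,
          (-1 : R) ^ (T.card - k) * ∏ j ∈ T, ν j := by
        rw [Finset.powerset_univ]
        exact Finset.sum_congr rfl fun T _ => step1 T
    _ = ∑ A ∈ (Finset.univ : Finset (Fin m)).powersetCard k,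
          ∑ T ∈ (Finset.univ : Finset (Fin m)).powerset.filter (fun T => A ⊆ T),
            (-1 : R) ^ (T.card - k) * ∏ j ∈ T, ν j := by
        refine Finset.sum_comm' ?_
        intro T A
        simp only [mem_powerset, mem_powersetCard, mem_filter]
        constructor
        · rintro ⟨h1, h2, h3⟩
          exact ⟨⟨h1, h2⟩, h2.trans h1, h3⟩
        · rintro ⟨⟨h1, h2⟩, h3, h4⟩
          exact ⟨h1, h2, h4⟩
    _ = ∑ A ∈ (Finset.univ : Finset (Fin m)).powersetCard k,
          (∏ j ∈ A, ν j) * ∏ j ∈ Aᶜ, (1 - ν j) := by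
        refine Finset.sum_congr rfl fun A hA => ?_
        rw [mem_powersetCard] at hA
        rw [sum_supersets_eq _ A hA.1]
        have hcompl : Finset.univ \ A = Aᶜ := (Finset.compl_eq_univ_sdiff A).symm
        rw [hcompl]
        have hterm : ∀ D ∈ Aᶜ.powerset,
            (-1 : R) ^ ((A ∪ D).card - k) * ∏ j ∈ A ∪ D, ν j
              = (∏ j ∈ A, ν j) * ((∏ _j ∈ D, (-1 : R)) * ∏ j ∈ D, ν j) := by
          intro D hD
          rw [mem_powerset] at hD
          have hdisj : Disjoint A D := (disjoint_compl_right.mono_right hD)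
          rw [Finset.prod_union hdisj, Finset.card_union_of_disjoint hdisj, hA.2,
            Nat.add_sub_cancel_left, Finset.prod_const]
          ring
        rw [Finset.sum_congr rfl hterm]
        have : ∀ D : Finset (Fin m), (∏ _j ∈ D, (-1 : R)) * ∏ j ∈ D, ν j
            = ∏ j ∈ D, (-ν j) := by
          intro D; rw [← Finset.prod_mul_distrib]; simp
        calc ∑ D ∈ Aᶜ.powerset, (∏ j ∈ A, ν j) * ((∏ _j ∈ D, (-1 : R)) * ∏ j ∈ D, ν j)
            = (∏ j ∈ A, ν j) * ∑ D ∈ Aᶜ.powerset, (∏ j ∈ D, (-ν j)) * ∏ _j ∈ Aᶜ \ D, (1 : R) := by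
              rw [Finset.mul_sum]
              exact Finset.sum_congr rfl fun D _ => by rw [this]; simp
          _ = (∏ j ∈ A, ν j) * ∏ j ∈ Aᶜ, (1 - ν j) := by
              rw [← Finset.prod_add]
              congr 1
              exact Finset.prod_congr rfl fun j _ => by ring
    _ = ∑ T ∈ Finset.univ.filter (fun T : Finset (Fin m) => T.card = k),
          (∏ j ∈ T, ν j) * ∏ j ∈ Tᶜ, (1 - ν j) := by
        rw [Finset.powersetCard_eq_filter, Finset.powerset_univ]

open Matrix in
/-- Determinant of a matrix whose rows off `s` are the corresponding rows of the identity: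
it equals the principal minor on `s`. -/
lemma det_piecewise_one_s11 {m : ℕ} (A : Matrix (Fin m) (Fin m) R) (s : Finset (Fin m)) :
    (Matrix.of (s.piecewise (fun i => A i) (fun i => (1 : Matrix (Fin m) (Fin m) R) i))).det
      = (A.submatrix (s.orderEmbOfFin rfl) (s.orderEmbOfFin rfl)).det := by
  set f : Fin s.card → Fin m := fun a => s.orderEmbOfFin rfl a with hf
  set f' : Fin sᶜ.card → Fin m := fun a => sᶜ.orderEmbOfFin rfl a with hf'
  have hfs : ∀ a, f a ∈ s := fun a => Finset.orderEmbOfFin_mem s rfl a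
  have hfs' : ∀ a, f' a ∉ s := fun a =>
    Finset.mem_compl.mp (Finset.orderEmbOfFin_mem sᶜ rfl a)
  have hginj : Function.Injective (Sum.elim f f') := by
    rintro (a | a) (b | b) h
    · simp only [Sum.elim_inl] at h
      exact congrArg Sum.inl ((s.orderEmbOfFin rfl).injective h)
    · simp only [Sum.elim_inl, Sum.elim_inr] at h
      exact absurd (h ▸ hfs a) (hfs' b)
    · simp only [Sum.elim_inl, Sum.elim_inr] at h
      exact absurd (h.symm ▸ hfs b) (hfs' a)
    · simp only [Sum.elim_inr] at h
      exact congrArg Sum.inr ((sᶜ.orderEmbOfFin rfl).injective h)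
  have hcard : Fintype.card (Fin s.card ⊕ Fin sᶜ.card) = Fintype.card (Fin m) := by
    simp [Finset.card_add_card_compl s]
  set e : (Fin s.card ⊕ Fin sᶜ.card) ≃ Fin m :=
    Equiv.ofBijective _ ((Fintype.bijective_iff_injective_and_card _).2 ⟨hginj, hcard⟩) with he
  set N := Matrix.of (s.piecewise (fun i => A i) (fun i => (1 : Matrix (Fin m) (Fin m) R) i))
    with hN
  rw [← Matrix.det_submatrix_equiv_self e N]
  have hblock : N.submatrix e e
      = Matrix.fromBlocks (A.submatrix f f) (A.submatrix f f') 0 1 := by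
    ext i j
    rcases i with a | a <;> rcases j with b | b
    · have : N (f a) (f b) = A (f a) (f b) := by
        show (if f a ∈ s then A (f a) else (1 : Matrix (Fin m) (Fin m) R) (f a)) (f b) = _
        rw [if_pos (hfs a)]
      simpa [he] using this
    · have : N (f a) (f' b) = A (f a) (f' b) := by
        show (if f a ∈ s then A (f a) else (1 : Matrix (Fin m) (Fin m) R) (f a)) (f' b) = _
        rw [if_pos (hfs a)]
      simpa [he] using this
    · have : N (f' a) (f b) = 0 := by
        show (if f' a ∈ s then A (f' a) else (1 : Matrix (Fin m) (Fin m) R) (f' a)) (f b) = _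
        rw [if_neg (hfs' a)]
        exact Matrix.one_apply_ne fun h => hfs' a (h ▸ hfs b)
      simpa [he] using this
    · have : N (f' a) (f' b) = if a = b then 1 else 0 := by
        show (if f' a ∈ s then A (f' a) else (1 : Matrix (Fin m) (Fin m) R) (f' a)) (f' b) = _
        rw [if_neg (hfs' a)]
        rw [Matrix.one_apply]
        congr 1
        simp only [eq_iff_iff]
        exact ⟨fun h => (sᶜ.orderEmbOfFin rfl).injective h, fun h => h ▸ rfl⟩
      simpa [he, Matrix.one_apply] using this
  rw [hblock, Matrix.det_fromBlocks_zero₂₁, Matrix.det_one, mul_one]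

open Polynomial Matrix in
/-- Row expansion of `det (M.map C + X • 1)` into principal minors. -/
lemma det_add_diagonal_X {m : ℕ} (M : Matrix (Fin m) (Fin m) R) :
    (M.map Polynomial.C + Matrix.diagonal (fun _ => (Polynomial.X : R[X]))).det
      = ∑ s : Finset (Fin m),
          Polynomial.C ((M.submatrix (s.orderEmbOfFin rfl) (s.orderEmbOfFin rfl)).det)
            * Polynomial.X ^ sᶜ.card := by
  classical
  set a : Fin m → (Fin m → R[X]) := fun i => (M.map C) i with ha
  set b : Fin m → (Fin m → R[X]) := fun i => (Matrix.diagonal fun _ => (X : R[X])) i with hb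
  have h0 : (M.map C + Matrix.diagonal (fun _ => (X : R[X]))).det
      = Matrix.detRowAlternating (a + b) := rfl
  rw [h0]
  have hadd : Matrix.detRowAlternating (a + b)
      = ∑ s : Finset (Fin m), Matrix.detRowAlternating (s.piecewise a b) :=
    (Matrix.detRowAlternating (R := R[X]) (n := Fin m)).toMultilinearMap.map_add_univ a b
  rw [hadd]
  refine Finset.sum_congr rfl fun s _ => ?_
  set e1 : Fin m → (Fin m → R[X]) := fun i => (1 : Matrix (Fin m) (Fin m) R[X]) i with he1
  set w : Fin m → (Fin m → R[X]) := s.piecewise a e1 with hw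
  have key : s.piecewise a b = sᶜ.piecewise (fun i => (X : R[X]) • w i) w := by
    funext i
    by_cases hi : i ∈ s
    · rw [Finset.piecewise_eq_of_mem _ _ _ hi,
        Finset.piecewise_eq_of_notMem _ _ _ (by simpa using hi), hw,
        Finset.piecewise_eq_of_mem _ _ _ hi]
    · rw [Finset.piecewise_eq_of_notMem _ _ _ hi,
        Finset.piecewise_eq_of_mem _ _ _ (Finset.mem_compl.2 hi), hw,
        Finset.piecewise_eq_of_notMem _ _ _ hi]
      funext j
      simp only [hb, Matrix.diagonal_apply, he1, Pi.smul_apply, smul_eq_mul, Matrix.one_apply,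
        mul_ite, mul_one, mul_zero]
  rw [key]
  have hsmul : Matrix.detRowAlternating (sᶜ.piecewise (fun i => (X : R[X]) • w i) w)
      = (∏ _i ∈ sᶜ, (X : R[X])) • Matrix.detRowAlternating w :=
    (Matrix.detRowAlternating (R := R[X]) (n := Fin m)).toMultilinearMap.map_piecewise_smul
      (fun _ => (X : R[X])) w sᶜ
  rw [hsmul]
  have hfw : Matrix.detRowAlternating w
      = C ((M.submatrix (s.orderEmbOfFin rfl) (s.orderEmbOfFin rfl)).det) := by
    have hmat : Matrix.of w
        = (Matrix.of (s.piecewise (fun i => M i)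
            (fun i => (1 : Matrix (Fin m) (Fin m) R) i))).map C := by
      ext i j
      by_cases hi : i ∈ s
      · simp only [hw, ha, Matrix.of_apply, Matrix.map_apply,
          Finset.piecewise_eq_of_mem _ _ _ hi]
      · simp only [hw, he1, Matrix.of_apply, Matrix.map_apply,
          Finset.piecewise_eq_of_notMem _ _ _ hi]
        simp [Matrix.one_apply, apply_ite C]
    have : Matrix.detRowAlternating w = (Matrix.of w).det := rfl
    rw [this, hmat, ← RingHom.mapMatrix_apply, ← RingHom.map_det, det_piecewise_one_s11]
  rw [hfw, Finset.prod_const, smul_eq_mul, mul_comm]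

open Polynomial Matrix in
/-- Spectral evaluation of `det (M.map C + X • 1)` for a Hermitian matrix. -/
lemma det_add_diagonal_X_eigen {m : ℕ} (M : Matrix (Fin m) (Fin m) ℂ) (hM : M.IsHermitian) :
    (M.map Polynomial.C + Matrix.diagonal (fun _ => (Polynomial.X : ℂ[X]))).det
      = ∏ j, (Polynomial.C ((hM.eigenvalues j : ℂ)) + Polynomial.X) := by
  set U : Matrix (Fin m) (Fin m) ℂ :=
    (Matrix.IsHermitian.eigenvectorUnitary hM : Matrix (Fin m) (Fin m) ℂ) with hUdef
  have hU : U * star U = 1 :=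
    (Matrix.mem_unitaryGroup_iff).mp (Matrix.IsHermitian.eigenvectorUnitary hM).2
  set D : Matrix (Fin m) (Fin m) ℂ := Matrix.diagonal (fun j => (hM.eigenvalues j : ℂ)) with hD
  have hspec : M = U * D * star U := hM.spectral_theorem
  have hone : (U.map C) * ((star U).map C) = 1 := by
    rw [← Matrix.map_mul, hU, Matrix.map_one C C.map_zero C.map_one]
  have key : M.map C + Matrix.diagonal (fun _ => (X : ℂ[X]))
      = (U.map C) * (D.map C + Matrix.diagonal fun _ => (X : ℂ[X])) * ((star U).map C) := by
    rw [mul_add, add_mul]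
    congr 1
    · rw [hspec, Matrix.map_mul, Matrix.map_mul]
    · have hscal : Matrix.diagonal (fun _ : Fin m => (X : ℂ[X]))
          = Matrix.scalar (Fin m) (X : ℂ[X]) := rfl
      rw [hscal, ← Matrix.scalar_commute (X : ℂ[X]) (fun r' => Commute.all _ _) (U.map C),
        mul_assoc, hone, mul_one]
  have hU' : star U * U = 1 :=
    (Matrix.mem_unitaryGroup_iff').mp (Matrix.IsHermitian.eigenvectorUnitary hM).2
  have hone' : ((star U).map C) * (U.map C) = 1 := by
    rw [← Matrix.map_mul, hU', Matrix.map_one C C.map_zero C.map_one]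
  rw [key, Matrix.det_mul, Matrix.det_mul, mul_comm, ← mul_assoc, ← Matrix.det_mul, hone',
    Matrix.det_one, one_mul]
  have : D.map C + Matrix.diagonal (fun _ => (X : ℂ[X]))
      = Matrix.diagonal (fun j => C ((hM.eigenvalues j : ℂ)) + X) := by
    rw [hD, Matrix.diagonal_map C.map_zero, Matrix.diagonal_add]
  rw [this, Matrix.det_diagonal]

open Polynomial Matrix in
/-- Sum of principal `c × c` minors of a Hermitian matrix equals the `c`-th elementary
symmetric polynomial of its eigenvalues. -/
lemma minor_sum_eq_esymm {m : ℕ} (M : Matrix (Fin m) (Fin m) ℂ) (hM : M.IsHermitian) (c : ℕ) :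
    ∑ T ∈ Finset.univ.filter (fun T : Finset (Fin m) => T.card = c),
        (M.submatrix (T.orderEmbOfFin rfl) (T.orderEmbOfFin rfl)).det
      = ∑ T ∈ Finset.univ.filter (fun T : Finset (Fin m) => T.card = c),
          ∏ j ∈ T, (hM.eigenvalues j : ℂ) := by
  have hcardle : ∀ T : Finset (Fin m), T.card ≤ m := fun T => by
    simpa using Finset.card_le_univ T
  by_cases hc : c ≤ m
  · have h1 := det_add_diagonal_X M
    have h2 := det_add_diagonal_X_eigen M hM
    have h3 : ∏ j, (C ((hM.eigenvalues j : ℂ)) + X)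
        = ∑ s : Finset (Fin m), C (∏ j ∈ s, (hM.eigenvalues j : ℂ)) * X ^ sᶜ.card := by
      rw [Finset.prod_add, Finset.powerset_univ]
      refine Finset.sum_congr rfl fun s _ => ?_
      rw [← Finset.compl_eq_univ_sdiff, Finset.prod_const, map_prod]
    have hpoly : (∑ s : Finset (Fin m),
          C ((M.submatrix (s.orderEmbOfFin rfl) (s.orderEmbOfFin rfl)).det) * X ^ sᶜ.card)
        = ∑ s : Finset (Fin m), C (∏ j ∈ s, (hM.eigenvalues j : ℂ)) * X ^ sᶜ.card :=
      h1.symm.trans (h2.trans h3)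
    have hco := congrArg (fun q : ℂ[X] => q.coeff (m - c)) hpoly
    simp only [Polynomial.finset_sum_coeff, Polynomial.coeff_C_mul,
      Polynomial.coeff_X_pow] at hco
    have hiff : ∀ s : Finset (Fin m), (sᶜ.card = m - c) ↔ s.card = c := by
      intro s
      rw [Finset.card_compl, Fintype.card_fin]
      have := hcardle s
      omega
    have conv1 : ∀ (g : Finset (Fin m) → ℂ),
        (∑ s : Finset (Fin m), g s * if m - c = sᶜ.card then (1 : ℂ) else 0)
          = ∑ s ∈ Finset.univ.filter (fun s : Finset (Fin m) => s.card = c), g s := by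
      intro g
      rw [Finset.sum_filter]
      refine Finset.sum_congr rfl fun s _ => ?_
      by_cases h : s.card = c
      · have h2 : m - c = sᶜ.card := ((hiff s).2 h).symm
        simp [h, h2]
      · have h2 : ¬(m - c = sᶜ.card) := fun hh => h ((hiff s).1 hh.symm)
        simp [h, h2]
    rw [conv1, conv1] at hco
    exact hco
  · have he : Finset.univ.filter (fun T : Finset (Fin m) => T.card = c) = ∅ :=
      Finset.filter_false_of_mem (fun T _ hT => hc (hT ▸ hcardle T))
    rw [he]
    simp

/-- `detMinor` of the image of `T` under the order embedding of `E` is the corresponding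
principal minor of the restriction of `K` to `E`. -/
lemma detMinor_image {n : ℕ} (K : Matrix (Fin n) (Fin n) ℂ) (E : Finset (Fin n))
    (T : Finset (Fin E.card)) :
    detMinor K (T.image (E.orderEmbOfFin rfl))
      = ((Matrix.of fun a b : Fin E.card =>
          K (E.orderEmbOfFin rfl a) (E.orderEmbOfFin rfl b)).submatrix
            (T.orderEmbOfFin rfl) (T.orderEmbOfFin rfl)).det := by
  have hinj : Function.Injective (E.orderEmbOfFin rfl) := (E.orderEmbOfFin rfl).injective
  have hcard : (T.image (E.orderEmbOfFin rfl)).card = T.card :=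
    Finset.card_image_of_injective T hinj
  have hg : (fun x : Fin (T.image (E.orderEmbOfFin rfl)).card =>
        E.orderEmbOfFin rfl (T.orderEmbOfFin rfl (Fin.cast hcard x)))
      = ⇑((T.image (E.orderEmbOfFin rfl)).orderEmbOfFin rfl) := by
    apply Finset.orderEmbOfFin_unique
    · intro x
      exact Finset.mem_image_of_mem _ (Finset.orderEmbOfFin_mem T rfl _)
    · intro x y hxy
      have hxy' : (Fin.cast hcard x) < (Fin.cast hcard y) := by
        rw [Fin.lt_def] at hxy ⊢
        simpa using hxy
      exact (E.orderEmbOfFin rfl).strictMono ((T.orderEmbOfFin rfl).strictMono hxy')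
  unfold detMinor
  rw [← Matrix.det_submatrix_equiv_self (finCongr hcard)
    ((Matrix.of fun a b : Fin E.card =>
      K (E.orderEmbOfFin rfl a) (E.orderEmbOfFin rfl b)).submatrix
        (T.orderEmbOfFin rfl) (T.orderEmbOfFin rfl))]
  congr 1
  ext a b
  simp only [Matrix.of_apply, Matrix.submatrix_apply, finCongr_apply]
  rw [← hg]

end Helpers

open scoped ComplexOrder in
theorem determinantal_count_in_subset_poisson_binomial {n : ℕ}
    (K : Matrix (Fin n) (Fin n) ℂ)
    (hK : K.IsHermitian) (hpos : K.PosSemidef) (hcon : (1 - K).PosSemidef)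
    (p : PMF (Finset (Fin n))) (hp : IsDeterminantal K p) (E : Finset (Fin n))
    (hKE : (Matrix.of fun a b : Fin E.card =>
        K (E.orderEmbOfFin rfl a) (E.orderEmbOfFin rfl b)).IsHermitian)
    (k : ℕ) :
    ∑ S ∈ Finset.univ.filter (fun S : Finset (Fin n) => (S ∩ E).card = k),
        (p S).toReal =
      ∑ T ∈ Finset.univ.filter (fun T : Finset (Fin E.card) => T.card = k),
        (∏ j ∈ T, hKE.eigenvalues j) * ∏ j ∈ Tᶜ, (1 - hKE.eigenvalues j) := by
  classical
  apply Complex.ofReal_injective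
  push_cast
  -- abbreviations
  have stepA : ∑ S ∈ Finset.univ.filter (fun S : Finset (Fin n) => (S ∩ E).card = k),
        ((p S).toReal : ℂ)
      = ∑ B ∈ E.powerset,
          (-1 : ℂ) ^ (B.card - k) * (B.card.choose k : ℂ) * detMinor K B := by
    have h1 : ∀ B ∈ E.powerset,
        (-1 : ℂ) ^ (B.card - k) * (B.card.choose k : ℂ) * detMinor K B
          = ∑ S ∈ Finset.univ.filter (fun S => B ⊆ S),
              (-1 : ℂ) ^ (B.card - k) * (B.card.choose k : ℂ) * ((p S).toReal : ℂ) := by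
      intro B _
      rw [← Finset.mul_sum, hp B]
    rw [Finset.sum_congr rfl h1]
    rw [Finset.sum_comm' (s := E.powerset)
      (t := fun B => Finset.univ.filter (fun S => B ⊆ S))
      (t' := Finset.univ) (s' := fun S => E.powerset.filter (fun B => B ⊆ S))
      (by
        intro B S
        simp only [Finset.mem_powerset, Finset.mem_filter, Finset.mem_univ, true_and, and_true]
        try tauto)]
    rw [Finset.sum_filter]
    refine Finset.sum_congr rfl fun S _ => ?_
    have hps : E.powerset.filter (fun B => B ⊆ S) = (S ∩ E).powerset := by
      ext B
      simp only [Finset.mem_powerset, Finset.mem_filter, Finset.subset_inter_iff]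
      tauto
    rw [hps, ← Finset.sum_mul, comb_sum (S ∩ E) k]
    by_cases h : (S ∩ E).card = k <;> simp [h]
  have hEimg : Finset.univ.image (fun t : Fin E.card => E.orderEmbOfFin rfl t) = E := by
    apply Finset.eq_of_subset_of_card_le
    · intro x hx
      rcases Finset.mem_image.1 hx with ⟨t, _, rfl⟩
      exact Finset.orderEmbOfFin_mem E rfl t
    · rw [Finset.card_image_of_injective _ (E.orderEmbOfFin rfl).injective]
      simp
  have himg : E.powerset
      = Finset.univ.image (fun T : Finset (Fin E.card) => T.image (E.orderEmbOfFin rfl)) := by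
    ext B
    simp only [Finset.mem_powerset, Finset.mem_image, Finset.mem_univ, true_and]
    constructor
    · intro hB
      refine ⟨Finset.univ.filter (fun t => E.orderEmbOfFin rfl t ∈ B), ?_⟩
      ext b
      simp only [Finset.mem_image, Finset.mem_filter, Finset.mem_univ, true_and]
      constructor
      · rintro ⟨t, ht, rfl⟩; exact ht
      · intro hb
        have hbE : b ∈ Finset.univ.image (fun t : Fin E.card => E.orderEmbOfFin rfl t) :=
          hEimg.symm ▸ hB hb
        rcases Finset.mem_image.1 hbE with ⟨t, _, rfl⟩
        exact ⟨t, hb, rfl⟩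
    · rintro ⟨T, rfl⟩
      intro x hx
      rcases Finset.mem_image.1 hx with ⟨t, _, rfl⟩
      exact Finset.orderEmbOfFin_mem E rfl t
  have stepB : ∑ B ∈ E.powerset,
        (-1 : ℂ) ^ (B.card - k) * (B.card.choose k : ℂ) * detMinor K B
      = ∑ T : Finset (Fin E.card),
          (-1 : ℂ) ^ (T.card - k) * (T.card.choose k : ℂ)
            * ((Matrix.of fun a b : Fin E.card =>
                K (E.orderEmbOfFin rfl a) (E.orderEmbOfFin rfl b)).submatrix
                  (T.orderEmbOfFin rfl) (T.orderEmbOfFin rfl)).det := by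
    rw [himg, Finset.sum_image (by
      intro x _ y _ h
      exact Finset.image_injective (E.orderEmbOfFin rfl).injective h)]
    refine Finset.sum_congr rfl fun T _ => ?_
    rw [Finset.card_image_of_injective T (E.orderEmbOfFin rfl).injective, detMinor_image]
  have hmaps : ∀ T : Finset (Fin E.card), T ∈ (Finset.univ : Finset (Finset (Fin E.card)))
      → T.card ∈ Finset.range (E.card + 1) := fun T _ =>
    Finset.mem_range.2 (Nat.lt_succ_of_le (by simpa using Finset.card_le_univ T))
  have stepC : ∑ T : Finset (Fin E.card),
        (-1 : ℂ) ^ (T.card - k) * (T.card.choose k : ℂ)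
          * ((Matrix.of fun a b : Fin E.card =>
              K (E.orderEmbOfFin rfl a) (E.orderEmbOfFin rfl b)).submatrix
                (T.orderEmbOfFin rfl) (T.orderEmbOfFin rfl)).det
      = ∑ T : Finset (Fin E.card),
          (-1 : ℂ) ^ (T.card - k) * (T.card.choose k : ℂ)
            * ∏ j ∈ T, ((hKE.eigenvalues j : ℝ) : ℂ) := by
    rw [← Finset.sum_fiberwise_of_maps_to hmaps, ← Finset.sum_fiberwise_of_maps_to hmaps]
    refine Finset.sum_congr rfl fun c _ => ?_
    have hA : ∀ (G : Finset (Fin E.card) → ℂ),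
        ∑ T ∈ Finset.univ.filter (fun T : Finset (Fin E.card) => T.card = c),
          (-1 : ℂ) ^ (T.card - k) * (T.card.choose k : ℂ) * G T
        = (-1 : ℂ) ^ (c - k) * (c.choose k : ℂ)
            * ∑ T ∈ Finset.univ.filter (fun T : Finset (Fin E.card) => T.card = c), G T := by
      intro G
      rw [Finset.mul_sum]
      refine Finset.sum_congr rfl fun T hT => ?_
      rw [(Finset.mem_filter.1 hT).2]
    rw [hA, hA, minor_sum_eq_esymm _ hKE c]
  rw [stepA, stepB, stepC]
  exact master (fun j => ((hKE.eigenvalues j : ℝ) : ℂ)) k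
end
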